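/- Let m ≥ 1 and let M be a Lie module over W. For s ∈ ℤ^m, let I_sM ⊆ M be the ℂ-span of the elements h_i • v − s_i·v for v ∈ M and 1 ≤ i ≤ m (where h_i = t_i∂_i ∈ W). Then for every α ∈ ℤ_{≥0}^m, every i ∈ {1,…,m}, and every s ∈ ℤ^m, one has (t^α∂_i) • (I_sM) ⊆ I_{s+α−e_i}M, where e_i is the i-th standard basis vector; consequently t^α∂_i induces a well-defined ℂ-linear map M/I_sM → M/I_{s+α−e_i}M, and moreover each h_j acts on M/I_sM as the scalar s_j. -/

import Mathlib

open MvPolynomial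

attribute [local instance 100] LieRing.ofAssociativeRing

lemma key_mul' (m : ℕ) (α : Fin m →₀ ℕ) (j : Fin m) :
    (X j : MvPolynomial (Fin m) ℂ) * pderiv j (monomial α 1) = (α j : ℂ) • monomial α (1:ℂ) := by
  rw [pderiv_monomial, one_mul]
  by_cases h : α j = 0
  · simp [h]
  · have hsum : Finsupp.single j 1 + (α - Finsupp.single j 1) = α := by
      ext k
      by_cases hk : k = j <;> simp [Finsupp.single_apply, hk, Ne.symm] <;> omega
    rw [X, monomial_mul, one_mul, smul_monomial, hsum, smul_eq_mul, mul_one]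

lemma bracket_eq' (m : ℕ) (α : Fin m →₀ ℕ) (i j : Fin m) :
    ⁅((X j : MvPolynomial (Fin m) ℂ) • pderiv j :
        Derivation ℂ (MvPolynomial (Fin m) ℂ) (MvPolynomial (Fin m) ℂ)),
      (monomial α (1:ℂ)) • pderiv i⁆
    = (((α j : ℂ) - if j = i then (1:ℂ) else 0)) •
      ((monomial α (1:ℂ)) • pderiv i :
        Derivation ℂ (MvPolynomial (Fin m) ℂ) (MvPolynomial (Fin m) ℂ)) := by
  apply MvPolynomial.derivation_ext
  intro k
  rw [Derivation.commutator_apply]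
  simp only [Derivation.smul_apply, smul_eq_mul, Derivation.coe_smul, Pi.smul_apply]
  rw [pderiv_X, pderiv_X, Pi.single_apply, Pi.single_apply]
  by_cases hik : k = i
  · rw [if_pos hik]
    simp only [mul_one]
    rw [key_mul']
    by_cases hji : j = i
    · rw [if_pos (hik.trans hji.symm), if_pos hji]
      simp only [mul_one]
      rw [hji, pderiv_X_self, mul_one, sub_smul, one_smul]
    · rw [if_neg (fun h : k = j => hji (h ▸ hik)), if_neg hji]
      simp only [mul_zero, map_zero, sub_zero, smul_eq_mul]
  · rw [if_neg hik]
    simp only [mul_zero, map_zero, smul_zero, zero_sub, neg_eq_zero]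
    by_cases hjk : k = j
    · rw [if_pos hjk]
      simp only [mul_one]
      rw [pderiv_X, Pi.single_apply, if_neg (fun h : j = i => hik (hjk.trans h)), mul_zero]
    · rw [if_neg hjk]
      simp only [mul_zero, map_zero]


/-- For a `W`-module `M` and `s ∈ ℤ^m`, the subspace `I_sM`: the ℂ-span of the
elements `h_j • v − s_j·v` (`h_j = t_j∂_j`), used in the weighting functor. -/
noncomputable def weightingSubmodule (m : ℕ) (M : Type*) [AddCommGroup M] [Module ℂ M]
    (π : Derivation ℂ (MvPolynomial (Fin m) ℂ) (MvPolynomial (Fin m) ℂ) →ₗ⁅ℂ⁆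
      Module.End ℂ M)
    (s : Fin m → ℤ) : Submodule ℂ M :=
  Submodule.span ℂ {x : M | ∃ (j : Fin m) (v : M),
    x = π ((X j : MvPolynomial (Fin m) ℂ) • pderiv j) v - (s j : ℂ) • v}

/-- For every `α ∈ ℤ_{≥0}^m`, `i`, `s ∈ ℤ^m`:
`(t^α∂_i)(I_sM) ⊆ I_{s+α−e_i}M`; consequently `t^α∂_i` induces a well-defined linear
map `M/I_sM → M/I_{s+α−e_i}M`, and each `h_j` acts on `M/I_sM` as the scalar `s_j`.
This is the key well-definedness underlying the weighting functor. -/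
theorem weighting_functor_well_defined
    (m : ℕ) (hm : 1 ≤ m)
    (M : Type*) [AddCommGroup M] [Module ℂ M]
    (π : Derivation ℂ (MvPolynomial (Fin m) ℂ) (MvPolynomial (Fin m) ℂ) →ₗ⁅ℂ⁆
      Module.End ℂ M) :
    ∀ (α : Fin m →₀ ℕ) (i : Fin m) (s : Fin m → ℤ),
      (∀ x ∈ weightingSubmodule m M π s,
        π ((monomial α (1 : ℂ)) • pderiv i) x ∈
          weightingSubmodule m M π
            (fun k => s k + (α k : ℤ) - if k = i then 1 else 0)) ∧
      (∃ g : (M ⧸ weightingSubmodule m M π s) →ₗ[ℂ]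
          (M ⧸ weightingSubmodule m M π
            (fun k => s k + (α k : ℤ) - if k = i then 1 else 0)),
        ∀ v : M, g (Submodule.Quotient.mk v) =
          Submodule.Quotient.mk (π ((monomial α (1 : ℂ)) • pderiv i) v)) ∧
      (∀ (j : Fin m) (v : M),
        (Submodule.Quotient.mk (π ((X j : MvPolynomial (Fin m) ℂ) • pderiv j) v) :
          M ⧸ weightingSubmodule m M π s) =
        (s j : ℂ) • Submodule.Quotient.mk v) := by
  intro α i s
  set s' : Fin m → ℤ := fun k => s k + (α k : ℤ) - if k = i then 1 else 0 with hs'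
  set D : Module.End ℂ M := π ((monomial α (1 : ℂ)) • pderiv i) with hD
  set H : Fin m → Module.End ℂ M :=
    fun j => π ((X j : MvPolynomial (Fin m) ℂ) • pderiv j) with hH
  have comm : ∀ (j : Fin m) (v : M),
      D (H j v) = H j (D v) - ((α j : ℂ) - if j = i then (1:ℂ) else 0) • D v := by
    intro j v
    have h1 := π.map_lie ((X j : MvPolynomial (Fin m) ℂ) • pderiv j)
      ((monomial α (1:ℂ)) • pderiv i)
    rw [bracket_eq'] at h1
    rw [map_smul] at h1
    have h4 := congrArg (fun (f : Module.End ℂ M) => f v) h1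
    simp only [Ring.lie_def, LinearMap.sub_apply, Module.End.mul_apply,
      LinearMap.smul_apply, ← hD, ← hH] at h4
    rw [show π ((X j : MvPolynomial (Fin m) ℂ) • pderiv j) = H j from rfl] at h4
    rw [eq_sub_iff_add_eq, h4]
    abel
  have hcast : ∀ j : Fin m, ((s' j : ℤ) : ℂ)
      = (s j : ℂ) + ((α j : ℂ) - if j = i then (1:ℂ) else 0) := by
    intro j
    simp only [hs']
    push_cast
    split_ifs <;> ring
  have part1 : ∀ x ∈ weightingSubmodule m M π s,
      D x ∈ weightingSubmodule m M π s' := by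
    intro x hx
    induction hx using Submodule.span_induction with
    | mem y hy =>
        obtain ⟨j, v, rfl⟩ := hy
        rw [map_sub, D.map_smul]
        rw [show π ((X j : MvPolynomial (Fin m) ℂ) • pderiv j) = H j from rfl, comm j v]
        have heq : H j (D v) - ((α j : ℂ) - if j = i then (1:ℂ) else 0) • D v
            - (s j : ℂ) • D v = H j (D v) - ((s' j : ℤ) : ℂ) • D v := by
          rw [hcast j, add_smul]
          abel
        rw [heq]
        exact Submodule.subset_span ⟨j, D v, rfl⟩
    | zero => simpa using (weightingSubmodule m M π s').zero_mem
    | add y z _ _ hy hz => rw [map_add]; exact (weightingSubmodule m M π s').add_mem hy hz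
    | smul c y _ hy => rw [map_smul]; exact (weightingSubmodule m M π s').smul_mem c hy
  refine ⟨part1, ?_, ?_⟩
  · exact ⟨Submodule.mapQ _ _ D (fun x hx => part1 x hx),
      fun v => by rw [Submodule.mapQ_apply]⟩
  · intro j v
    rw [← sub_eq_zero, ← Submodule.Quotient.mk_smul, ← Submodule.Quotient.mk_sub,
      Submodule.Quotient.mk_eq_zero]
    exact Submodule.subset_span ⟨j, v, rfl⟩
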